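/- arXiv:2203.06336 — 6 statements merged into one kernel-verified Lean document; each statement's English description precedes it below -/
import Mathlib

section
/- Let s be a prime power, let n1, n2 be positive integers divisible appropriately by s, let a, c ∈ GF(s)^{n1}, and let b, d ∈ GF(s)^{n1·n2} be partitioned into consecutive blocks b_1,…,b_{n1} and d_1,…,d_{n1} of length n2. If for every i = 1,…,n1 the n2×2 matrix (b_i, d_i) is an OA(n2, 2, s, 2), then the (n1·n2)×2 matrix (a⊛b, c⊛d) is an OA(n1·n2, 2, s, 2). -/
/-!
Translating all rows of an orthogonal array by one fixed vector only relabels the symbol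
tuples, so the block `(a_i + b_i, c_i + d_i)` is again an OA; and stacking OAs of equal strength
gives an OA, because the counts of every tuple add up block by block.
-/

open Finset

/-- `M` (rows indexed by `R`, columns by `C`, entries in the finite field `F` with
`s = Fintype.card F` elements) is an orthogonal array of strength `t`: for any choice of `t`
distinct columns and any `t`-tuple of symbols, the number of rows showing that tuple, times
`s ^ t`, equals the number of rows (i.e. each tuple appears exactly `(card R) / s ^ t` times). -/
def IsOA {R C F : Type*} [Fintype R] [Fintype F] [DecidableEq F]
    (M : R → C → F) (t : ℕ) : Prop :=
  ∀ cols : Fin t → C, Function.Injective cols → ∀ v : Fin t → F,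
    (Finset.univ.filter fun r : R => ∀ j, M r (cols j) = v j).card
      * Fintype.card F ^ t = Fintype.card R

theorem IsOA.const_add {R C F : Type*} [Fintype R] [Fintype F] [DecidableEq F] [AddGroup F]
    {M : R → C → F} {t : ℕ} (hM : IsOA M t) (u : C → F) :
    IsOA (fun r => u + M r) t := by
  intro cols hcols v
  convert hM cols hcols (fun j => -u (cols j) + v j) using 3 with r
  simp only [Pi.add_apply, eq_neg_add_iff_add_eq]

theorem IsOA.prod {ι R C F : Type*} [Fintype ι] [Fintype R] [Fintype F] [DecidableEq F]
    {M : ι → R → C → F} {t : ℕ} (hM : ∀ i, IsOA (M i) t) :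
    IsOA (fun p : ι × R => M p.1 p.2) t := by
  intro cols hcols v
  calc (univ.filter fun p : ι × R => ∀ j, M p.1 p.2 (cols j) = v j).card * Fintype.card F ^ t
      = ∑ i, (univ.filter fun r : R => ∀ j, M i r (cols j) = v j).card
          * Fintype.card F ^ t := by
        rw [card_filter, Fintype.sum_prod_type, sum_mul]
        simp only [card_filter]
    _ = Fintype.card (ι × R) := by
        simp [hM _ cols hcols v, Fintype.card_prod]

/-- Rows of the generalized Kronecker sums are indexed by pairs `(i, j) : Fin n₁ × Fin n₂`,
`(i, j)` being row `j` of block `i`. -/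
theorem statement0_general {F : Type} [Field F] [Fintype F] [DecidableEq F]
    {n1 n2 : ℕ}
    (a c : Fin n1 → F) (b d : Fin n1 → Fin n2 → F)
    (hbd : ∀ i : Fin n1, IsOA (fun j : Fin n2 => ![b i j, d i j]) 2) :
    IsOA (fun p : Fin n1 × Fin n2 => ![a p.1 + b p.1 p.2, c p.1 + d p.1 p.2]) 2 := by
  have hblocks := IsOA.prod fun i => (hbd i).const_add ![a i, c i]
  simpa only [Matrix.cons_add_cons, Matrix.empty_add_empty] using hblocks

/-- Lemma 2(i): if every block pair `(bᵢ, dᵢ)` is an `OA(n₂, 2, s, 2)`, then the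
two-column array `(a ⊛ b, c ⊛ d)` is an `OA(n₁n₂, 2, s, 2)`.  Rows of the generalized Kronecker
sums are indexed by pairs `(i, j) : Fin n₁ × Fin n₂`, `(i, j)` being row `j` of block `i`. -/
theorem statement0 {F : Type} [Field F] [Fintype F] [DecidableEq F]
    {n1 n2 : ℕ} (hn1 : 0 < n1) (hn2 : 0 < n2)
    (a c : Fin n1 → F) (b d : Fin n1 → Fin n2 → F)
    (hbd : ∀ i : Fin n1, IsOA (fun j : Fin n2 => ![b i j, d i j]) 2) :
    IsOA (fun p : Fin n1 × Fin n2 => ![a p.1 + b p.1 p.2, c p.1 + d p.1 p.2]) 2 :=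
  statement0_general a c b d hbd
end

section
/- Let s be a prime power, let a, c ∈ GF(s)^{n1}, and let b, d ∈ GF(s)^{n1·n2} be partitioned into consecutive blocks b_1,…,b_{n1} and d_1,…,d_{n1} of length n2. Suppose every block b_i is balanced and d = α·b for some α ∈ GF(s) (entrywise scalar multiplication). If one of the following holds: (1) α = 1 and the n1×2 matrix (a, c) is a difference scheme D(n1, 2, s); (2) (a, c) is an OA(n1, 2, s, 2); (3) c = 0, α ≠ 0, and a is balanced; (4) a = c, α ≠ 1, and a is balanced; then the (n1·n2)×2 matrix (a⊛b, c⊛d) is an OA(n1·n2, 2, s, 2). -/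
/-!
Write `x` and `y` for the two target symbols. Inside block `i` the conditions
`a i + b i j = x` and `c i + α * b i j = y` force `b i j = x - a i` and are then compatible
exactly when `c i - α * a i = y - α * x`. Since every block `b i` is balanced, the number of
rows of the Kronecker sum showing `(x, y)` is `n2 / s` times the number of `i` with
`c i - α * a i = y - α * x`. So `(a ⊛ b, c ⊛ α b)` is an `OA(n1 n2, 2, s, 2)` as soon as
`c - α a` is balanced, and each of the four conditions gives this.
-/

open Finset

/-- A vector over `F` is balanced if every symbol of `F` occurs equally often among its
entries. -/
def IsBalanced {R F : Type*} [Fintype R] [Fintype F] [DecidableEq F] (v : R → F) : Prop :=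
  ∀ x : F, (Finset.univ.filter fun r : R => v r = x).card * Fintype.card F = Fintype.card R

/-- `M` is a difference scheme: for any two distinct columns, the vector of entrywise
differences contains every element of `F` equally often. -/
def IsDiffScheme {R C F : Type*} [Fintype R] [Field F] [Fintype F] [DecidableEq F]
    (M : R → C → F) : Prop :=
  ∀ j j' : C, j ≠ j' → ∀ x : F,
    (Finset.univ.filter fun r : R => M r j - M r j' = x).card * Fintype.card F
      = Fintype.card R

section

variable {R F : Type*} [Fintype R] [Fintype F] [DecidableEq F]

theorem isOA_two_iff (u v : R → F) :
    IsOA (fun r => ![u r, v r]) 2 ↔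
      ∀ x y : F, #{r | u r = x ∧ v r = y} * Fintype.card F ^ 2 = Fintype.card R := by
  constructor
  · intro h x y
    simpa [Fin.forall_fin_two] using h id Function.injective_id ![x, y]
  · intro h cols hcols w
    have h01 : cols 0 ≠ cols 1 := hcols.ne (by decide)
    simp only [Fin.forall_fin_two]
    revert h01
    generalize cols 0 = i
    generalize cols 1 = j
    fin_cases i <;> fin_cases j <;>
      simp only [Fin.zero_eta, Fin.mk_one, Fin.isValue, ne_eq, not_true_eq_false, zero_ne_one,
        one_ne_zero, not_false_eq_true, Matrix.cons_val_zero, Matrix.cons_val_one,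
        Matrix.cons_val_fin_one, IsEmpty.forall_iff, forall_const]
    · exact h (w 0) (w 1)
    · simpa only [and_comm] using h (w 1) (w 0)

theorem IsBalanced.comp_equiv {v : R → F} (hv : IsBalanced v) (e : F ≃ F) :
    IsBalanced (fun r => e (v r)) := by
  intro x
  simpa only [← e.eq_symm_apply] using hv (e.symm x)

end

section Field

variable {R F : Type*} [Fintype R] [Field F] [Fintype F] [DecidableEq F]

theorem IsBalanced.mul_left {v : R → F} (hv : IsBalanced v) {u : F} (hu : u ≠ 0) :
    IsBalanced (fun r => u * v r) :=
  hv.comp_equiv (Equiv.mulLeft₀ u hu)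

theorem IsDiffScheme.isBalanced_sub {u v : R → F}
    (h : IsDiffScheme (fun r => ![u r, v r])) : IsBalanced (fun r => v r - u r) :=
  fun x => by simpa using h 1 0 (by decide) x

/-- Summing the strength-two counts over the value `w` of `u` counts the rows with
`v - α u = z`. -/
theorem IsOA.isBalanced_sub_mul {u v : R → F} (h : IsOA (fun r => ![u r, v r]) 2) (α : F) :
    IsBalanced (fun r => v r - α * u r) := by
  rw [isOA_two_iff] at h
  intro z
  have hfiber : ∀ w : F,
      #{r | v r - α * u r = z ∧ u r = w} = #{r | u r = w ∧ v r = z + α * w} :=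
    fun w => congrArg card <| filter_congr fun r _ => by
      constructor
      · rintro ⟨hz, rfl⟩
        exact ⟨rfl, by linear_combination hz⟩
      · rintro ⟨rfl, hz⟩
        exact ⟨by linear_combination hz, rfl⟩
  have hsplit : #{r | v r - α * u r = z} = ∑ w : F, #{r | v r - α * u r = z ∧ u r = w} := by
    rw [card_eq_sum_card_fiberwise (f := u) (t := univ) fun r _ => mem_univ _]
    simp only [filter_filter]
  refine Nat.eq_of_mul_eq_mul_right (Fintype.card_pos (α := F)) ?_
  calc #{r | v r - α * u r = z} * Fintype.card F * Fintype.card F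
      = ∑ w : F, #{r | u r = w ∧ v r = z + α * w} * Fintype.card F ^ 2 := by
        rw [hsplit, sum_mul, sum_mul]
        refine sum_congr rfl fun w _ => ?_
        rw [hfiber]
        ring
    _ = Fintype.card R * Fintype.card F := by
        rw [sum_congr rfl fun w _ => h w (z + α * w), sum_const, card_univ, smul_eq_mul, mul_comm]

theorem IsBalanced.card_filter_add_eq_and_add_mul_eq {J : Type*} [Fintype J] {v : J → F}
    (hv : IsBalanced v) (a₀ c₀ α x y : F) :
    #{j | a₀ + v j = x ∧ c₀ + α * v j = y} * Fintype.card F =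
      if c₀ - α * a₀ = y - α * x then Fintype.card J else 0 := by
  split_ifs with h
  · convert hv (x - a₀) using 3
    refine filter_congr fun j _ => ⟨fun hj => by linear_combination hj.1, fun hj => ?_⟩
    exact ⟨by linear_combination hj, by linear_combination α * hj + h⟩
  · rw [card_eq_zero.mpr, zero_mul]
    refine filter_eq_empty_iff.mpr fun j _ hj => h ?_
    linear_combination hj.2 - α * hj.1

theorem isOA_kroneckerSum {I J : Type*} [Fintype I] [Fintype J] (a c : I → F) (b : I → J → F)
    (α : F) (hb : ∀ i, IsBalanced (b i)) (hbal : IsBalanced (fun i => c i - α * a i)) :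
    IsOA (fun p : I × J => ![a p.1 + b p.1 p.2, c p.1 + α * b p.1 p.2]) 2 := by
  rw [isOA_two_iff]
  intro x y
  have hsum : #{p : I × J | a p.1 + b p.1 p.2 = x ∧ c p.1 + α * b p.1 p.2 = y} =
      ∑ i, #{j | a i + b i j = x ∧ c i + α * b i j = y} := by
    simp only [card_filter]
    exact Fintype.sum_prod_type _
  calc #{p : I × J | a p.1 + b p.1 p.2 = x ∧ c p.1 + α * b p.1 p.2 = y} * Fintype.card F ^ 2
      = (∑ i, #{j | a i + b i j = x ∧ c i + α * b i j = y} * Fintype.card F)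
          * Fintype.card F := by
        rw [hsum, pow_two, ← mul_assoc, sum_mul]
    _ = (∑ i, if c i - α * a i = y - α * x then Fintype.card J else 0) * Fintype.card F := by
        simp only [fun i => (hb i).card_filter_add_eq_and_add_mul_eq (a i) (c i) α x y]
    _ = #{i | c i - α * a i = y - α * x} * Fintype.card F * Fintype.card J := by
        rw [← sum_filter, sum_const, smul_eq_mul]
        ring
    _ = Fintype.card (I × J) := by
        rw [hbal, Fintype.card_prod]

end Field

/-- Lemma 2(ii). -/
theorem statement1 {F : Type} [Field F] [Fintype F] [DecidableEq F]
    {n1 n2 : ℕ}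
    (a c : Fin n1 → F) (b d : Fin n1 → Fin n2 → F) (α : F)
    (hb : ∀ i : Fin n1, IsBalanced (b i))
    (hd : ∀ i j, d i j = α * b i j)
    (hcond :
      (α = 1 ∧ IsDiffScheme (fun i : Fin n1 => ![a i, c i]))
      ∨ IsOA (fun i : Fin n1 => ![a i, c i]) 2
      ∨ ((∀ i, c i = 0) ∧ α ≠ 0 ∧ IsBalanced a)
      ∨ (a = c ∧ α ≠ 1 ∧ IsBalanced a)) :
    IsOA (fun p : Fin n1 × Fin n2 => ![a p.1 + b p.1 p.2, c p.1 + d p.1 p.2]) 2 := by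
  obtain rfl : d = fun i j => α * b i j := funext fun i => funext (hd i)
  refine isOA_kroneckerSum a c b α hb ?_
  rcases hcond with ⟨rfl, hDS⟩ | hOA | ⟨hc, hα, ha⟩ | ⟨rfl, hα, ha⟩
  · simpa only [one_mul] using hDS.isBalanced_sub
  · exact hOA.isBalanced_sub_mul α
  · convert ha.mul_left (neg_ne_zero.mpr hα) using 2 with i
    rw [hc i]
    ring
  · convert ha.mul_left (sub_ne_zero.mpr hα.symm) using 2
    ring
end

section
/- Let s be a prime power, let a, c, e ∈ GF(s)^{n1}, and let b, d, f ∈ GF(s)^{n1·n2} be partitioned into consecutive blocks of length n2: b_1,…,b_{n1}; d_1,…,d_{n1}; f_1,…,f_{n1}. Suppose that for every i = 1,…,n1 the n2×2 matrix (b_i, d_i) is an OA(n2, 2, s, 2), that f = α·b for some α ∈ GF(s), and that the n1×2 matrix (e, α·a) is a difference scheme D(n1, 2, s). Then the (n1·n2)×3 matrix (a⊛b, c⊛d, e⊛f) is an OA(n1·n2, 3, s, 3). -/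
/-! Fix a target triple `(x, y, z)`. A row `(i, j)` of the Kronecker sums hits it iff
`(b i j, d i j) = (x - a i, y - c i)` and, since `f = α b`, `e i - α a i = z - α x`.
The last condition involves only the block `i`: by the difference-scheme property it holds
for `n1 / s` blocks, and inside each such block the orthogonal array `(b_i, d_i)` supplies
exactly `n2 / s²` rows, so the triple occurs `n1 n2 / s³` times. -/

open Finset

theorem isOA_iff_forall_card_filter_eq {R F : Type*} [Fintype R] [Fintype F] [DecidableEq F]
    {t : ℕ} (M : R → Fin t → F) :
    IsOA M t ↔ ∀ v : Fin t → F,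
      (univ.filter fun r => M r = v).card * Fintype.card F ^ t = Fintype.card R := by
  constructor
  · intro hM v
    simpa only [funext_iff, id] using hM id Function.injective_id v
  · intro hM cols hcols v
    let σ : Fin t ≃ Fin t := Equiv.ofBijective cols (Finite.injective_iff_bijective.mp hcols)
    have hrow : ∀ r, (∀ j, M r (cols j) = v j) ↔ M r = v ∘ σ.symm := fun r => by
      rw [funext_iff, ← σ.forall_congr_right (q := fun k => M r k = (v ∘ σ.symm) k)]
      simp [σ]
    simpa only [hrow] using hM (v ∘ σ.symm)

theorem card_filter_prod_eq_sum {R₁ R₂ : Type*} [Fintype R₁] [Fintype R₂]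
    (P : R₁ → Prop) (Q : R₁ → R₂ → Prop) [DecidablePred P] [∀ i, DecidablePred (Q i)] :
    (univ.filter fun p : R₁ × R₂ => P p.1 ∧ Q p.1 p.2).card
      = ∑ i ∈ univ.filter P, (univ.filter (Q i)).card := by
  simp only [card_filter, ← univ_product_univ, sum_product, sum_filter, ite_and]
  exact sum_congr rfl fun i _ => by split_ifs <;> simp

theorem kroneckerSum_row_eq_iff {K : Type*} [CommRing K] (a b c d e α x y z : K) :
    (a + b = x ∧ c + d = y ∧ e + α * b = z)
      ↔ e - α * a = z - α * x ∧ (b = x - a ∧ d = y - c) := by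
  constructor
  · rintro ⟨rfl, rfl, rfl⟩
    exact ⟨by ring, by ring, by ring⟩
  · rintro ⟨h, rfl, rfl⟩
    exact ⟨by ring, by ring, by linear_combination h⟩

/-- Lemma 3(ii). -/
theorem statement4 {F : Type} [Field F] [Fintype F] [DecidableEq F]
    {n1 n2 : ℕ}
    (a c e : Fin n1 → F) (b d f : Fin n1 → Fin n2 → F) (α : F)
    (hbd : ∀ i : Fin n1, IsOA (fun j : Fin n2 => ![b i j, d i j]) 2)
    (hf : ∀ i j, f i j = α * b i j)
    (hea : IsDiffScheme (fun i : Fin n1 => ![e i, α * a i])) :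
    IsOA (fun p : Fin n1 × Fin n2 =>
      ![a p.1 + b p.1 p.2, c p.1 + d p.1 p.2, e p.1 + f p.1 p.2]) 3 := by
  rw [isOA_iff_forall_card_filter_eq]
  intro v
  set S := univ.filter fun i => e i - α * a i = v 2 - α * v 0
  have hS : S.card * Fintype.card F = n1 := by simpa using hea 0 1 (by decide) (v 2 - α * v 0)
  have hblock : ∀ i, (univ.filter fun j => b i j = v 0 - a i ∧ d i j = v 1 - c i).card
      * Fintype.card F ^ 2 = n2 := fun i => by
    simpa using (isOA_iff_forall_card_filter_eq _).mp (hbd i) ![v 0 - a i, v 1 - c i]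
  have hrows : (univ.filter fun p : Fin n1 × Fin n2 =>
      ![a p.1 + b p.1 p.2, c p.1 + d p.1 p.2, e p.1 + f p.1 p.2] = v).card
      = ∑ i ∈ S, (univ.filter fun j => b i j = v 0 - a i ∧ d i j = v 1 - c i).card := by
    rw [← card_filter_prod_eq_sum]
    congr 1
    refine filter_congr fun p _ => ?_
    rw [← kroneckerSum_row_eq_iff, hf]
    simp [funext_iff, Fin.forall_fin_succ]
  rw [hrows, Fintype.card_prod, Fintype.card_fin, Fintype.card_fin]
  calc (∑ i ∈ S, _) * Fintype.card F ^ 3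
      = (∑ i ∈ S, (univ.filter fun j => b i j = v 0 - a i ∧ d i j = v 1 - c i).card
          * Fintype.card F ^ 2) * Fintype.card F := by rw [← sum_mul]; ring
    _ = S.card * Fintype.card F * n2 := by
      rw [sum_congr rfl fun i _ => hblock i, sum_const, smul_eq_mul]; ring
    _ = n1 * n2 := by rw [hS]
end

section
/- Let A be an OA(n1, n1−1, 2, 2) and let B_1,…,B_{n1} each be an OA(n2, n2−1, 2, 2) (all over GF(2)). Then the array E of the construction (with s = 2, m1 = n1−1, m2 = n2−1) is an OA(n1·n2, n1·n2−1, 2, 2), i.e., a saturated two-level orthogonal array of strength two. -/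
/-!
Over `GF(2)` an array has strength two as soon as every column and every sum of two distinct
columns is balanced: the four counts of pairs of symbols in two columns are then pinned down by
three balance conditions.  With a zero column adjoined, every column of `E` is a block column
`a(i) + bᵢ(j)`, where `a` is zero or a column of `A` and `bᵢ` is zero or a column of `Bᵢ`.  In the
sum of two such columns either the `B`-parts differ, and the sum is balanced in `j` for each
fixed `i`, or they cancel in characteristic two while the `A`-parts differ, and the sum is
balanced in `i`.
-/

open Finset

/-- The array `E = [D₁, …, D_{s−1}, D_s, D_{s+1}]` of the construction.  Rows are indexed by
pairs `(i, j)` (`j`-th row of the `i`-th block).  The columns of the blocks `D_g`,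
`g = 1, …, s−1`, are indexed by triples `(g, k, l)` where `g` runs over the nonzero elements
of `F` (i.e. `α₁, …, α_{s−1}`); the corresponding entry of `D_g` in row `(i, j)` is
`A i k + α_g • (B i) j l`, i.e. row-wise `aᵢ ⊕ (α_g · Bᵢ)`.  `D_s = B` (the stacked `Bᵢ`'s)
has columns `Sum.inr (Sum.inl l)`, and `D_{s+1} = A ⊕ 0` has columns `Sum.inr (Sum.inr k)`. -/
def OAE {I F : Type} [Field F] {m1 n2 m2 : ℕ}
    (A : I → Fin m1 → F) (B : I → Fin n2 → Fin m2 → F) :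
    (I × Fin n2) → (({g : F // g ≠ 0} × Fin m1 × Fin m2) ⊕ (Fin m2 ⊕ Fin m1)) → F
  | p, Sum.inl (g, k, l) => A p.1 k + g.1 * B p.1 p.2 l
  | p, Sum.inr (Sum.inl l) => B p.1 p.2 l
  | p, Sum.inr (Sum.inr k) => A p.1 k

section Balanced

variable {R F : Type*} [Fintype R] [Fintype F] [DecidableEq F]

lemma IsBalanced.const_add [AddGroup F] {v : R → F} (hv : IsBalanced v) (a : F) :
    IsBalanced fun r => a + v r := by
  intro x
  simp_rw [← eq_neg_add_iff_add_eq]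
  exact hv _

lemma IsBalanced.comp_fst {J : Type*} [Fintype J] {v : R → F} (hv : IsBalanced v) :
    IsBalanced fun p : R × J => v p.1 := by
  intro x
  rw [← Finset.univ_product_univ, Finset.filter_product_left (fun i => v i = x),
    Finset.card_product, Fintype.card_prod, mul_right_comm, hv x, Finset.card_univ]

lemma IsBalanced.prod_of_forall {J : Type*} [Fintype J] {f : R → J → F}
    (hf : ∀ i, IsBalanced (f i)) : IsBalanced fun p : R × J => f p.1 p.2 := by
  intro x
  calc (Finset.univ.filter fun p : R × J => f p.1 p.2 = x).card * Fintype.card F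
      = ∑ i, (Finset.univ.filter fun j => f i j = x).card * Fintype.card F := by
        simp only [Finset.card_filter, Fintype.sum_prod_type, Finset.sum_mul]
    _ = Fintype.card (R × J) := by
        simp only [hf _ x, Finset.sum_const, Finset.card_univ, Fintype.card_prod, smul_eq_mul]

end Balanced

section OrthogonalArray

variable {R C F : Type*} [Fintype R] [Fintype F] [DecidableEq F]

lemma IsOA.isBalanced_col {M : R → C → F} (hM : IsOA M 1) (c : C) :
    IsBalanced fun r => M r c := by
  intro x
  simpa [Fin.forall_fin_one] using
    hM (fun _ => c) (Function.injective_of_subsingleton _) (fun _ => x)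

lemma IsOA.isBalanced_add_col [AddGroup F] {M : R → C → F} (hM : IsOA M 2) {c c' : C}
    (hc : c ≠ c') : IsBalanced fun r => M r c + M r c' := by
  intro z
  have hinj : Function.Injective ![c, c'] := by
    intro a b hab
    fin_cases a <;> fin_cases b <;> simp_all [eq_comm]
  have hfiber : ∀ a : F, (Finset.univ.filter fun r => M r c = a ∧ M r c' = -a + z).card
      * Fintype.card F ^ 2 = Fintype.card R := fun a => by
    simpa [Fin.forall_fin_two] using hM ![c, c'] hinj ![a, -a + z]
  have hsplit : ∀ a : F, (Finset.univ.filter fun r => M r c + M r c' = z ∧ M r c = a)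
      = Finset.univ.filter fun r => M r c = a ∧ M r c' = -a + z := fun a => by
    ext r
    simp only [Finset.mem_filter, Finset.mem_univ, true_and]
    constructor
    · rintro ⟨h, rfl⟩; exact ⟨rfl, eq_neg_add_of_add_eq h⟩
    · rintro ⟨rfl, h⟩; exact ⟨by rw [h, add_neg_cancel_left], rfl⟩
  have hcard : 0 < Fintype.card F := Fintype.card_pos_iff.mpr ⟨z⟩
  refine Nat.eq_of_mul_eq_mul_left hcard ?_
  rw [Finset.card_eq_sum_card_fiberwise (f := fun r => M r c) (t := Finset.univ)
    (fun _ _ => Finset.mem_coe.mpr (Finset.mem_univ _))]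
  simp only [Finset.filter_filter, hsplit]
  calc Fintype.card F * ((∑ a, (Finset.univ.filter fun r => M r c = a ∧ M r c' = -a + z).card)
        * Fintype.card F)
      = ∑ a, (Finset.univ.filter fun r => M r c = a ∧ M r c' = -a + z).card
          * Fintype.card F ^ 2 := by
        rw [Finset.sum_mul, Finset.mul_sum]
        exact Finset.sum_congr rfl fun a _ => by ring
    _ = Fintype.card F * Fintype.card R := by
        simp only [hfiber, Finset.sum_const, Finset.card_univ, smul_eq_mul]

end OrthogonalArray

section TwoElementField

variable {F : Type*} [Field F] [Fintype F]

lemma ne_iff_eq_add_one_of_card_eq_two (hs : Fintype.card F = 2) {a b : F} :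
    a ≠ b ↔ a = b + 1 := by
  classical
  have huniv : (Finset.univ : Finset F) = {0, 1} :=
    (Finset.eq_of_subset_of_card_le (Finset.subset_univ _)
      (by rw [Finset.card_univ, hs, Finset.card_pair zero_ne_one])).symm
  have hmem : ∀ x : F, x = 0 ∨ x = 1 := fun x => by
    simpa [huniv] using Finset.mem_univ x
  constructor
  · intro h
    rcases hmem (a - b) with h0 | h1
    · exact absurd (sub_eq_zero.mp h0) h
    · exact sub_eq_iff_eq_add'.mp h1
  · rintro rfl h
    simp at h

lemma eq_one_of_ne_zero_of_card_eq_two (hs : Fintype.card F = 2) {g : F} (hg : g ≠ 0) :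
    g = 1 := by
  simpa using (ne_iff_eq_add_one_of_card_eq_two hs).mp hg

lemma charP_two_of_card_eq_two (hs : Fintype.card F = 2) : CharP F 2 :=
  charP_of_card_eq_prime hs

end TwoElementField

section PairSums

variable {R C F : Type*} [Fintype R] [Fintype F] [DecidableEq F]

/-- `none` indexes an adjoined zero column, so that single columns and sums of two distinct
columns can be treated alike. -/
def withZeroColumn [Zero F] (M : R → C → F) (r : R) : Option C → F
  | none => 0
  | some c => M r c

def HasBalancedPairSums [AddZeroClass F] (M : R → C → F) : Prop :=
  ∀ o o' : Option C, o ≠ o' → IsBalanced fun r => withZeroColumn M r o + withZeroColumn M r o'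

lemma IsOA.hasBalancedPairSums [AddGroup F] {M : R → C → F} (h1 : IsOA M 1) (h2 : IsOA M 2) :
    HasBalancedPairSums M := by
  rintro (_ | c) (_ | c') hne
  · exact absurd rfl hne
  · simpa [withZeroColumn] using h1.isBalanced_col c'
  · simpa [withZeroColumn] using h1.isBalanced_col c
  · exact h2.isBalanced_add_col fun h => hne (congrArg some h)

lemma card_filter_eq_add_card_filter_eq_add_one [Field F] (hs : Fintype.card F = 2)
    (P : R → Prop) [DecidablePred P] (f : R → F) (y : F) :
    (Finset.univ.filter P).card = (Finset.univ.filter fun r => P r ∧ f r = y).card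
      + (Finset.univ.filter fun r => P r ∧ f r = y + 1).card := by
  rw [← Finset.card_filter_add_card_filter_not (s := Finset.univ.filter P) (fun r => f r = y),
    Finset.filter_filter, Finset.filter_filter]
  simp only [ne_iff_eq_add_one_of_card_eq_two hs]

lemma HasBalancedPairSums.isOA_two [Field F] (hs : Fintype.card F = 2) {M : R → C → F}
    (hM : HasBalancedPairSums M) : IsOA M 2 := by
  intro cols hinj v
  simp only [Fin.forall_fin_two, hs]
  set c := cols 0
  set c' := cols 1
  have hc : c ≠ c' := hinj.ne (by decide)
  have hbal : IsBalanced fun r => M r c := by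
    simpa [withZeroColumn] using hM (some c) none (by simp)
  have hbal' : IsBalanced fun r => M r c' := by
    simpa [withZeroColumn] using hM (some c') none (by simp)
  have hbalSum : IsBalanced fun r => M r c + M r c' := by
    simpa [withZeroColumn] using hM (some c) (some c') (by simpa using hc)
  have h2F : (2 : F) = 0 := by exact_mod_cast hs ▸ FiniteField.cast_card_eq_zero F
  generalize v 0 = x
  generalize v 1 = y
  have hsplit₁ := card_filter_eq_add_card_filter_eq_add_one hs (fun r => M r c = x) (M · c') y
  have hsplit₂ :=
    card_filter_eq_add_card_filter_eq_add_one hs (fun r => M r c' = y + 1) (M · c) x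
  have hsplit₃ := card_filter_eq_add_card_filter_eq_add_one hs (fun r => M r c + M r c' = x + y)
    (M · c) x
  simp only [and_comm (a := M _ c' = y + 1)] at hsplit₂
  have e1 : ∀ r, M r c + M r c' = x + y ∧ M r c = x ↔ M r c = x ∧ M r c' = y := fun r => by
    constructor
    · rintro ⟨h, hx⟩; exact ⟨hx, by linear_combination h - hx⟩
    · rintro ⟨hx, h⟩; exact ⟨by linear_combination h + hx, hx⟩
  have e2 : ∀ r, M r c + M r c' = x + y ∧ M r c = x + 1 ↔ M r c = x + 1 ∧ M r c' = y + 1 :=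
    fun r => by
    constructor
    · rintro ⟨h, hx⟩; exact ⟨hx, by linear_combination h - hx - h2F⟩
    · rintro ⟨hx, h⟩; exact ⟨by linear_combination h + hx + h2F, hx⟩
  simp only [e1, e2] at hsplit₃
  have h1 : (Finset.univ.filter fun r => M r c = x).card * 2 = Fintype.card R := hs ▸ hbal x
  have h2 : (Finset.univ.filter fun r => M r c' = y + 1).card * 2 = Fintype.card R :=
    hs ▸ hbal' (y + 1)
  have h3 : (Finset.univ.filter fun r => M r c + M r c' = x + y).card * 2 = Fintype.card R :=
    hs ▸ hbalSum (x + y)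
  omega

end PairSums

section Construction

variable {I J K L F : Type*} [Fintype I] [Fintype J] [Fintype F] [DecidableEq F]

/-- Over `GF(2)` this array contains every column of `OAE A B` and the zero column
(`withZeroColumn_OAE`). -/
def blockArray [Zero F] [Add F] (A : I → K → F) (B : I → J → L → F) (p : I × J)
    (o : Option K × Option L) : F :=
  withZeroColumn A p.1 o.1 + withZeroColumn (B p.1) p.2 o.2

lemma isBalanced_blockArray_add [CommRing F] [CharP F 2] {A : I → K → F}
    {B : I → J → L → F} (hA : HasBalancedPairSums A) (hB : ∀ i, HasBalancedPairSums (B i))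
    {o o' : Option K × Option L} (hne : o ≠ o') :
    IsBalanced fun p => blockArray A B p o + blockArray A B p o' := by
  by_cases hl : o.2 = o'.2
  · have hk : o.1 ≠ o'.1 := fun hk => hne (Prod.ext hk hl)
    have hcancel : (fun p => blockArray A B p o + blockArray A B p o')
        = fun p : I × J => withZeroColumn A p.1 o.1 + withZeroColumn A p.1 o'.1 := by
      funext p
      rw [blockArray, blockArray, hl, add_add_add_comm, CharTwo.add_self_eq_zero, add_zero]
    rw [hcancel]
    exact (hA _ _ hk).comp_fst
  · have hsplit : (fun p => blockArray A B p o + blockArray A B p o')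
        = fun p : I × J => (withZeroColumn A p.1 o.1 + withZeroColumn A p.1 o'.1)
          + (withZeroColumn (B p.1) p.2 o.2 + withZeroColumn (B p.1) p.2 o'.2) := by
      funext p
      rw [blockArray, blockArray, add_add_add_comm]
    rw [hsplit]
    exact IsBalanced.prod_of_forall fun i =>
      (hB i _ _ hl).const_add (withZeroColumn A i o.1 + withZeroColumn A i o'.1)

end Construction

section OAE

variable {F : Type} [Field F] [Fintype F]

def oaeSupport {m1 m2 : ℕ} :
    Option (({g : F // g ≠ 0} × Fin m1 × Fin m2) ⊕ (Fin m2 ⊕ Fin m1)) →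
      Option (Fin m1) × Option (Fin m2)
  | none => (none, none)
  | some (Sum.inl (_, k, l)) => (some k, some l)
  | some (Sum.inr (Sum.inl l)) => (none, some l)
  | some (Sum.inr (Sum.inr k)) => (some k, none)

lemma oaeSupport_injective (hs : Fintype.card F = 2) {m1 m2 : ℕ} :
    Function.Injective (oaeSupport (F := F) (m1 := m1) (m2 := m2)) := by
  have : Subsingleton {g : F // g ≠ 0} := ⟨fun g g' => Subtype.ext <| by
    rw [eq_one_of_ne_zero_of_card_eq_two hs g.2, eq_one_of_ne_zero_of_card_eq_two hs g'.2]⟩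
  rintro (_ | ⟨⟨g, k, l⟩ | l | k⟩) (_ | ⟨⟨g', k', l'⟩ | l' | k'⟩) h <;>
    simp_all [oaeSupport, eq_iff_true_of_subsingleton]

lemma withZeroColumn_OAE (hs : Fintype.card F = 2) {I : Type} {m1 n2 m2 : ℕ}
    (A : I → Fin m1 → F) (B : I → Fin n2 → Fin m2 → F) (p : I × Fin n2)
    (o : Option (({g : F // g ≠ 0} × Fin m1 × Fin m2) ⊕ (Fin m2 ⊕ Fin m1))) :
    withZeroColumn (OAE A B) p o = blockArray A B p (oaeSupport o) := by
  have hg : ∀ g : {g : F // g ≠ 0}, (g : F) = 1 := fun g =>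
    eq_one_of_ne_zero_of_card_eq_two hs g.2
  rcases o with _ | ⟨⟨g, k, l⟩ | l | k⟩ <;>
    simp [withZeroColumn, blockArray, oaeSupport, OAE, hg]

lemma hasBalancedPairSums_OAE [DecidableEq F] (hs : Fintype.card F = 2) {I : Type} [Fintype I]
    {m1 n2 m2 : ℕ} {A : I → Fin m1 → F} {B : I → Fin n2 → Fin m2 → F}
    (hA : HasBalancedPairSums A) (hB : ∀ i, HasBalancedPairSums (B i)) :
    HasBalancedPairSums (OAE A B) := by
  have := charP_two_of_card_eq_two hs
  intro o o' hne
  simp only [withZeroColumn_OAE hs]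
  exact isBalanced_blockArray_add hA hB ((oaeSupport_injective hs).ne hne)

end OAE

lemma card_columns_OAE {F : Type} [Field F] [Fintype F] [DecidableEq F]
    (hs : Fintype.card F = 2) {n1 n2 : ℕ} (hn1 : 0 < n1) (hn2 : 0 < n2) :
    Fintype.card
        (({g : F // g ≠ 0} × Fin (n1 - 1) × Fin (n2 - 1)) ⊕ (Fin (n2 - 1) ⊕ Fin (n1 - 1)))
      = n1 * n2 - 1 := by
  have hunits : Fintype.card {g : F // g ≠ 0} = 1 := by
    rw [← Fintype.card_congr unitsEquivNeZero, Fintype.card_units, hs]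
  obtain ⟨a, rfl⟩ := Nat.exists_eq_add_one_of_ne_zero hn1.ne'
  obtain ⟨b, rfl⟩ := Nat.exists_eq_add_one_of_ne_zero hn2.ne'
  simp only [Fintype.card_sum, Fintype.card_prod, Fintype.card_fin, hunits, Nat.add_sub_cancel]
  rw [show (a + 1) * (b + 1) = a * b + b + a + 1 by ring]
  omega

/-- Corollary 1: with `s = 2`, `A` a saturated `OA(n₁, n₁−1, 2, 2)` and each
`Bᵢ` a saturated `OA(n₂, n₂−1, 2, 2)`, the array `E` is a saturated
`OA(n₁n₂, n₁n₂−1, 2, 2)`.  (An orthogonal array of strength 2 is in particular of strength 1,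
which is the content of the degenerate hypotheses `hA1`, `hB1` when `n₁−1 = 1` or
`n₂−1 = 1`.) -/
theorem statement8 {F : Type} [Field F] [Fintype F] [DecidableEq F]
    (hs : Fintype.card F = 2)
    {n1 n2 : ℕ} (hn1 : 0 < n1) (hn2 : 0 < n2)
    (A : Fin n1 → Fin (n1 - 1) → F) (B : Fin n1 → Fin n2 → Fin (n2 - 1) → F)
    (hA : IsOA A 2) (hA1 : IsOA A 1)
    (hB : ∀ i, IsOA (B i) 2) (hB1 : ∀ i, IsOA (B i) 1) :
    IsOA (OAE A B) 2 ∧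
      Fintype.card (({g : F // g ≠ 0} × Fin (n1 - 1) × Fin (n2 - 1)) ⊕ (Fin (n2 - 1) ⊕ Fin (n1 - 1)))
        = n1 * n2 - 1 := by
  have hAB : HasBalancedPairSums (OAE A B) :=
    hasBalancedPairSums_OAE hs (hA1.hasBalancedPairSums hA)
      fun i => (hB1 i).hasBalancedPairSums (hB i)
  exact ⟨hAB.isOA_two hs, card_columns_OAE hs hn1 hn2⟩
end

section
/- Let s be a prime power. Let A be the s×1 column vector containing each element of GF(s) exactly once (an OA(s, 1, s, 1)), and for i = 1,…,s let B_i be an OA(n2, m2, s, 2) if m2 = 2 or an OA(n2, m2, s, 3) if m2 ≥ 3. Then for every pair 1 ≤ g ≠ g' ≤ s, the (s·n2)×(2·m2) matrix (D_g, D_{g'}) is an OA(s·n2, 2·m2, s, 3). -/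
/-!
Fix three distinct columns of `(D_g, D_{g'})` and a target triple. In block `a`, an equation
`a + g x = y` pins down the entry `x` of `B_a`. If the three columns come from three distinct
columns of `B`, every block contributes `n₂ / s³` rows by strength 3 of `B_a`. Otherwise two of
them are one column of `B` read in `D_g` and in `D_{g'}`; since `g ≠ g'`, the two resulting
conditions on that column are compatible in exactly one block `a₀`, which contributes `n₂ / s²`
rows by strength 2 of `B_{a₀}` on the two distinct columns that remain.
-/

open Finset

section OrthogonalArray

variable {R C F : Type*} [Fintype R] [DecidableEq F] {M : R → C → F}

theorem filter_forall_fin_three_of_eq {l : Fin 3 → C} {w : Fin 3 → F} {j₁ j₂ j₃ : Fin 3}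
    (hcover : ∀ k, k = j₁ ∨ k = j₂ ∨ k = j₃) (hl : l j₁ = l j₂) :
    ({r | ∀ j, M r (l j) = w j} : Finset R)
      = if w j₁ = w j₂ then ({r | M r (l j₁) = w j₁ ∧ M r (l j₃) = w j₃} : Finset R)
        else ∅ := by
  split_ifs with hw
  · ext r
    simp only [mem_filter, mem_univ, true_and]
    refine ⟨fun h => ⟨h j₁, h j₃⟩, fun ⟨h₁, h₃⟩ j => ?_⟩
    rcases hcover j with rfl | rfl | rfl
    · exact h₁
    · rw [← hl, h₁, hw]
    · exact h₃
  · refine filter_eq_empty_iff.mpr fun r _ h => hw ?_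
    rw [← h j₁, ← h j₂, hl]

variable [Fintype F]

theorem isOA_of_card_lt [Fintype C] {t : ℕ} (h : Fintype.card C < t) : IsOA M t :=
  fun cols hcols => absurd (Fintype.card_le_of_injective cols hcols) (by simpa using h.not_ge)

theorem IsOA.of_succ [Fintype C] [Nonempty F] {t : ℕ} (h : IsOA M (t + 1))
    (ht : t + 1 ≤ Fintype.card C) : IsOA M t := by
  intro cols hcols v
  obtain ⟨c, hc⟩ : ∃ c, c ∉ Set.range cols := by
    by_contra! hall
    have := Fintype.card_le_of_surjective cols hall
    simp only [Fintype.card_fin] at this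
    omega
  set S : Finset R := {r | ∀ j, M r (cols j) = v j}
  have hfiber : ∀ x, ({r ∈ S | M r c = x} : Finset R)
      = ({r | ∀ j, M r (Fin.snoc (α := fun _ => C) cols c j)
          = Fin.snoc (α := fun _ => F) v x j} : Finset R) := by
    intro x
    ext r
    simp [S, Fin.forall_fin_succ']
  apply Nat.eq_of_mul_eq_mul_right (Fintype.card_pos (α := F))
  calc #S * Fintype.card F ^ t * Fintype.card F
        = (∑ x : F, #{r ∈ S | M r c = x}) * Fintype.card F ^ (t + 1) := by
        rw [card_eq_sum_card_fiberwise (fun _ _ => mem_univ (M _ c))]; ring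
    _ = ∑ _x : F, Fintype.card R := by
        rw [sum_mul]
        refine sum_congr rfl fun x _ => ?_
        rw [hfiber]
        exact h _ (Fin.snoc_injective_of_injective hcols hc) _
    _ = Fintype.card R * Fintype.card F := by simp [mul_comm]

theorem IsOA.card_filter_and (h : IsOA M 2) {c₁ c₂ : C} (hc : c₁ ≠ c₂) (u₁ u₂ : F) :
    #{r | M r c₁ = u₁ ∧ M r c₂ = u₂} * Fintype.card F ^ 2 = Fintype.card R := by
  have hinj : Function.Injective ![c₁, c₂] := by
    intro a b hab
    fin_cases a <;> fin_cases b <;> simp_all [eq_comm]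
  convert h ![c₁, c₂] hinj ![u₁, u₂] using 3
  simp [Fin.forall_fin_two]

end OrthogonalArray

theorem Sum.elim_const_ne_of_elim_id_eq {α β : Type*} {a b : α ⊕ α} (hab : a ≠ b)
    (h : Sum.elim id id a = Sum.elim id id b) {x y : β} (hxy : x ≠ y) :
    Sum.elim (fun _ => x) (fun _ => y) a ≠ Sum.elim (fun _ => x) (fun _ => y) b := by
  rcases a with a | a <;> rcases b with b | b <;> simp_all [eq_comm]

theorem Sum.elim_id_ne_of_elim_id_eq {α : Type*} {a b c : α ⊕ α}
    (hca : c ≠ a) (hcb : c ≠ b) (hab : a ≠ b) (h : Sum.elim id id a = Sum.elim id id b) :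
    Sum.elim id id c ≠ Sum.elim id id a := by
  rcases a with a | a <;> rcases b with b | b <;> rcases c with c | c <;> simp_all

section Construction

variable {F : Type*} [Field F] [DecidableEq F]

/-- The index `g = 0` stands for `D_s = B`, whose entry is `x` rather than `a + g x`. -/
def blockEntry (g a x : F) : F := if g = 0 then x else a + g * x

def blockEntryInv (g a y : F) : F := if g = 0 then y else (y - a) / g

theorem blockEntry_eq_iff {g a x y : F} : blockEntry g a x = y ↔ x = blockEntryInv g a y := by
  unfold blockEntry blockEntryInv
  split_ifs with hg
  · rfl
  · rw [eq_div_iff hg, eq_sub_iff_add_eq', mul_comm]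

theorem existsUnique_blockEntryInv_eq {g g' : F} (h : g ≠ g') (y y' : F) :
    ∃! a, blockEntryInv g a y = blockEntryInv g' a y' := by
  unfold blockEntryInv
  rcases eq_or_ne g 0 with rfl | hg <;> rcases eq_or_ne g' 0 with rfl | hg'
  · exact absurd rfl h
  · simp only [if_pos, if_neg hg', eq_div_iff hg']
    exact ⟨y' - y * g', by ring, fun a ha => by linear_combination ha⟩
  · simp only [if_pos, if_neg hg, div_eq_iff hg]
    exact ⟨y - y' * g, by ring, fun a ha => by linear_combination -ha⟩
  · have hsub : g' - g ≠ 0 := sub_ne_zero.mpr h.symm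
    simp only [if_neg hg, if_neg hg', div_eq_div_iff hg hg']
    refine ⟨(y * g' - y' * g) / (g' - g), by field_simp; ring, fun a ha => ?_⟩
    rw [eq_div_iff hsub]
    linear_combination -ha

variable {R κ : Type*}

/-- The array `D_g`: its row `(a, r)` is row `r` of the block `a ⊕ (g B_a)`. -/
def stackedArray (B : F → R → κ → F) (g : F) (p : F × R) (l : κ) : F :=
  blockEntry g p.1 (B p.1 p.2 l)

variable [Fintype F] [Fintype R] {B : F → R → κ → F}

theorem isOA_three_sumElim_stackedArray (h2 : ∀ a, IsOA (B a) 2) (h3 : ∀ a, IsOA (B a) 3)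
    {g g' : F} (hg : g ≠ g') :
    IsOA (fun p => Sum.elim (stackedArray B g p) (stackedArray B g' p)) 3 := by
  intro cols hcols v
  set l : Fin 3 → κ := fun j => Sum.elim id id (cols j)
  set γ : Fin 3 → F := fun j => Sum.elim (fun _ => g) (fun _ => g') (cols j)
  set w : F → Fin 3 → F := fun a j => blockEntryInv (γ j) a (v j)
  have hentry : ∀ p j, Sum.elim (stackedArray B g p) (stackedArray B g' p) (cols j)
      = blockEntry (γ j) p.1 (B p.1 p.2 (l j)) := by
    intro p j
    rcases hj : cols j <;> simp only [γ, l, hj] <;> rfl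
  have hcount :
      #{p | ∀ j, Sum.elim (stackedArray B g p) (stackedArray B g' p) (cols j) = v j}
        = ∑ a, #{r | ∀ j, B a r (l j) = w a j} := by
    simp only [hentry, blockEntry_eq_iff, card_filter, Fintype.sum_prod_type, w]
  rw [hcount, Fintype.card_prod, sum_mul]
  by_cases hl : Function.Injective l
  · simp [h3 _ l hl]
  obtain ⟨j₁, j₂, hl₁₂, hj₁₂⟩ := Function.not_injective_iff.mp hl
  have hthird : ∀ j₁ j₂ : Fin 3, j₁ ≠ j₂ →
      ∃ j₃, j₃ ≠ j₁ ∧ j₃ ≠ j₂ ∧ ∀ k, k = j₁ ∨ k = j₂ ∨ k = j₃ := by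
    decide
  obtain ⟨j₃, hj₃₁, hj₃₂, hcover⟩ := hthird j₁ j₂ hj₁₂
  have hγ : γ j₁ ≠ γ j₂ := Sum.elim_const_ne_of_elim_id_eq (hcols.ne hj₁₂) hl₁₂ hg
  have hl₃ : l j₃ ≠ l j₁ := Sum.elim_id_ne_of_elim_id_eq
    (hcols.ne hj₃₁) (hcols.ne hj₃₂) (hcols.ne hj₁₂) hl₁₂
  obtain ⟨a₀, hw₀, hw_unique⟩ := existsUnique_blockEntryInv_eq hγ (v j₁) (v j₂)
  have hblock : ∀ a, ({r | ∀ j, B a r (l j) = w a j} : Finset R)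
      = if a = a₀ then ({r | B a r (l j₁) = w a j₁ ∧ B a r (l j₃) = w a j₃} : Finset R)
        else ∅ := by
    intro a
    rw [filter_forall_fin_three_of_eq hcover hl₁₂]
    exact if_congr ⟨hw_unique a, fun h => h ▸ hw₀⟩ rfl rfl
  simp only [hblock, apply_ite card, card_empty, ite_mul, zero_mul, sum_ite_eq', mem_univ,
    if_true]
  calc _ = #{r | B a₀ r (l j₁) = w a₀ j₁ ∧ B a₀ r (l j₃) = w a₀ j₃}
        * Fintype.card F ^ 2 * Fintype.card F := by ring
    _ = _ := by rw [(h2 a₀).card_filter_and hl₃.symm, mul_comm]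

end Construction

theorem statement11_general {F : Type} [Field F] [Fintype F] [DecidableEq F]
    {n2 m2 : ℕ}
    (B : F → Fin n2 → Fin m2 → F)
    (hB2 : m2 = 2 → ∀ i, IsOA (B i) 2)
    (hB3 : 3 ≤ m2 → ∀ i, IsOA (B i) 3)
    (g g' : F) (hgg' : g ≠ g') :
    IsOA (fun (p : F × Fin n2) (col : Fin m2 ⊕ Fin m2) =>
      Sum.elim
        (fun l => if g = 0 then B p.1 p.2 l else p.1 + g * B p.1 p.2 l)
        (fun l => if g' = 0 then B p.1 p.2 l else p.1 + g' * B p.1 p.2 l)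
        col) 3 := by
  have h3 : ∀ i, IsOA (B i) 3 := fun i =>
    if hm : 3 ≤ m2 then hB3 hm i else isOA_of_card_lt (by simpa using hm)
  have h2 : ∀ i, IsOA (B i) 2 := fun i => by
    rcases lt_trichotomy m2 2 with hm | rfl | hm
    · exact isOA_of_card_lt (by simpa using hm)
    · exact hB2 rfl i
    · exact (h3 i).of_succ (by simpa using hm.nat_succ_le)
  exact isOA_three_sumElim_stackedArray h2 h3 hgg'

/-- Proposition 1: here `A` is the `s × 1` column containing each element of
`F = GF(s)` exactly once, so the rows of the construction are indexed by `F × Fin n₂`.  The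
arrays `D₁, …, D_s` are indexed by the elements `g` of `F`: for `g ≠ 0`, `D_g` has entries
`aᵢ + g·Bᵢ` (these are `D₁, …, D_{s−1}`, as `g` runs over the nonzero elements
`α₁, …, α_{s−1}`), while `g = 0` encodes `D_s = B`.  For any two distinct indices `g ≠ g'`,
the juxtaposed array `(D_g, D_{g'})` is an `OA(s·n₂, 2m₂, s, 3)`. -/
theorem statement11 {F : Type} [Field F] [Fintype F] [DecidableEq F]
    {n2 m2 : ℕ} (hm2 : 2 ≤ m2)
    (B : F → Fin n2 → Fin m2 → F)
    (hB2 : m2 = 2 → ∀ i, IsOA (B i) 2)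
    (hB3 : 3 ≤ m2 → ∀ i, IsOA (B i) 3)
    (g g' : F) (hgg' : g ≠ g') :
    IsOA (fun (p : F × Fin n2) (col : Fin m2 ⊕ Fin m2) =>
      Sum.elim
        (fun l => if g = 0 then B p.1 p.2 l else p.1 + g * B p.1 p.2 l)
        (fun l => if g' = 0 then B p.1 p.2 l else p.1 + g' * B p.1 p.2 l)
        col) 3 :=
  statement11_general B hB2 hB3 g g' hgg'
end

section
/- Let s be a prime power. Let A be an OA(s^2, 2, s, 2), let B_i be an OA(n2, m2, s, 3) for i = 1,…,s^2, and let F = [D_1, …, D_s] be the array E of the construction with its last two columns removed (i.e., with D_{s+1} removed). Then F is an OA(n2·s^2, (2s−1)·m2, s, 2), the number of 3-element subsets of columns of F that fail to be 3-orthogonal is exactly 2·m2·C(s, 3), and consequently p(F) = 1 − 2·m2·C(s,3)/C((2s−1)·m2, 3) = 1 − 2s(s−1)(s−2)/((2s−1)(γ−1)(γ−2)), where γ = (2s−1)·m2. -/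
/-!
Every column of `FmatG A B` is a linear form in the pair `(a, b)` formed by a row of `A` and a
row of `Bᵢ`: the column `(g, k, l)` is `a k + g * b l` and the column `l` of `D_s` is `b l`.
As `(i, j)` runs over the rows, `(A i, B i j)` restricted to three columns of `Bᵢ` is uniformly
distributed, so a set of at most three columns is orthogonal as soon as its linear forms are
jointly surjective. Two distinct forms always are. Three forms are not exactly when they lie in
one pencil `{a k + g * b l | g ≠ 0} ∪ {b l}`, all of whose members lie in the plane spanned by
`a k` and `b l`; otherwise one of the three has a direction on which the other two vanish.
The `2 * m₂` pencils have `s` columns each and share at most one column pairwise, which gives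
`2 * m₂ * C(s, 3)` non-orthogonal triples.
-/

open Finset

/-- Three (distinct) columns of `M` are 3-orthogonal if they form an `OA(card R, 3, s, 3)`;
a 3-element set `T` of column indices is 3-orthogonal if this holds for its three columns. -/
def TripleOrth {R C F : Type*} [Fintype R] [Fintype F] [DecidableEq F]
    (M : R → C → F) (T : Finset C) : Prop :=
  ∀ c1 c2 c3 : C,
    (c1 ∈ T ∧ c2 ∈ T ∧ c3 ∈ T ∧ c1 ≠ c2 ∧ c1 ≠ c3 ∧ c2 ≠ c3) →
    ∀ v : Fin 3 → F,
      (Finset.univ.filter fun r : R => M r c1 = v 0 ∧ M r c2 = v 1 ∧ M r c3 = v 2).card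
        * Fintype.card F ^ 3 = Fintype.card R

instance {R C F : Type*} [Fintype R] [Fintype C] [DecidableEq C] [Fintype F] [DecidableEq F]
    (M : R → C → F) (T : Finset C) : Decidable (TripleOrth M T) := by
  unfold TripleOrth; exact inferInstance

/-- The array `𝐅 = [D₁, …, D_s]` of the construction (the array `E` with the `m₁` columns of
`D_{s+1}` removed).  Rows are indexed by `I × Fin n₂`; columns `Sum.inl (g, k, l)` with `g`
running over nonzero elements of `F` are the columns of `D₁, …, D_{s−1}`, with entries
`A i k + g·(Bᵢ) j l`, and columns `Sum.inr l` are those of `D_s = B`. -/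
def FmatG {I F : Type} [Field F] {m1 n2 m2 : ℕ}
    (A : I → Fin m1 → F) (B : I → Fin n2 → Fin m2 → F) :
    (I × Fin n2) → (({g : F // g ≠ 0} × Fin m1 × Fin m2) ⊕ Fin m2) → F
  | p, Sum.inl (g, k, l) => A p.1 k + g.1 * B p.1 p.2 l
  | p, Sum.inr l => B p.1 p.2 l

section Balanced

variable {R : Type*} [Fintype R]

theorem isOA_iff_isBalanced {C F : Type*} [Fintype F] [DecidableEq F] (M : R → C → F) (t : ℕ) :
    IsOA M t ↔ ∀ cols : Fin t → C, Function.Injective cols →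
      IsBalanced fun r j => M r (cols j) := by
  simp only [IsOA, IsBalanced, funext_iff, Fintype.card_fun, Fintype.card_fin]

theorem IsBalanced.comp_addMonoidHom {V W : Type*} [AddGroup V] [Fintype V] [DecidableEq V]
    [AddMonoid W] [Fintype W] [DecidableEq W] {X : R → V} (hX : IsBalanced X) (f : V →+ W)
    (hf : Function.Surjective f) : IsBalanced (f ∘ X) := by
  intro w
  have hfiber : #{v | f v = w} * Fintype.card W = Fintype.card V := by
    have h := card_eq_sum_card_fiberwise (f := f) (s := univ) (t := univ) fun _ _ => mem_univ _
    rw [sum_congr rfl fun w' _ => AddMonoidHom.card_fiber_eq_of_mem_range f (hf w') (hf w),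
      sum_const, card_univ, card_univ, smul_eq_mul] at h
    rw [h, mul_comm]
  have hsplit : #{r | f (X r) = w} * Fintype.card V = #{v | f v = w} * Fintype.card R := by
    rw [card_eq_sum_card_fiberwise (f := X) (t := {v | f v = w}) fun r hr => by simpa using hr,
      sum_mul, sum_congr rfl fun v hv => ?_, sum_const, smul_eq_mul]
    rw [filter_filter, ← hX v]
    congr 2
    ext r
    simp only [mem_filter, mem_univ, true_and] at hv ⊢
    exact ⟨And.right, fun h => ⟨h ▸ hv, h⟩⟩
  refine Nat.eq_of_mul_eq_mul_right (Fintype.card_pos : 0 < Fintype.card V) ?_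
  rw [Function.comp_def, mul_right_comm, hsplit, mul_right_comm, hfiber, mul_comm]

theorem IsBalanced.prodMk {I J V W : Type*} [Fintype I] [Fintype J] [Fintype V] [DecidableEq V]
    [Fintype W] [DecidableEq W] {P : I → V} {Q : I → J → W} (hP : IsBalanced P)
    (hQ : ∀ i, IsBalanced (Q i)) : IsBalanced fun p : I × J => (P p.1, Q p.1 p.2) := by
  rintro ⟨v, w⟩
  have hsplit : #{p : I × J | (P p.1, Q p.1 p.2) = (v, w)}
      = ∑ i ∈ {i | P i = v}, #{j | Q i j = w} := by
    simp only [card_filter, Fintype.sum_prod_type, sum_filter, Prod.mk.injEq]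
    refine sum_congr rfl fun i _ => ?_
    split_ifs with h <;> simp [h]
  rw [hsplit, Fintype.card_prod, Fintype.card_prod, mul_left_comm, sum_mul,
    sum_congr rfl fun i _ => hQ i w, sum_const, smul_eq_mul, mul_comm, mul_right_comm, hP v]

theorem IsBalanced.comp_linearMap_of_ker_le {K U V W : Type*} [Field K]
    [AddCommGroup U] [Module K U] [Fintype U] [DecidableEq U]
    [AddCommGroup V] [Module K V] [AddCommGroup W] [Module K W] [Fintype W] [DecidableEq W]
    {X : R → V} (P : V →ₗ[K] U) (hP : Function.Surjective P) (hX : IsBalanced (P ∘ X))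
    (f : V →ₗ[K] W) (hf : Function.Surjective f) (hker : LinearMap.ker P ≤ LinearMap.ker f) :
    IsBalanced (f ∘ X) := by
  obtain ⟨g, hg⟩ := P.exists_rightInverse_of_surjective (LinearMap.range_eq_top.mpr hP)
  have hfactor : ∀ x, f (g (P x)) = f x := fun x => by
    have : g (P x) - x ∈ LinearMap.ker P := by
      simp [LinearMap.mem_ker, ← LinearMap.comp_apply P g, hg]
    simpa [sub_eq_zero] using hker this
  have hf' : Function.Surjective (f ∘ₗ g) := fun w => by
    obtain ⟨x, rfl⟩ := hf w
    exact ⟨P x, hfactor x⟩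
  convert hX.comp_addMonoidHom (f ∘ₗ g).toAddMonoidHom hf' using 1
  funext r
  exact (hfactor (X r)).symm

theorem tripleOrth_of_forall_isBalanced {C F : Type*} [Fintype F] [DecidableEq F]
    {M : R → C → F} {T : Finset C}
    (h : ∀ cols : Fin 3 → C, Function.Injective cols → (∀ j, cols j ∈ T) →
      IsBalanced fun r j => M r (cols j)) :
    TripleOrth M T := by
  rintro c1 c2 c3 ⟨h1, h2, h3, h12, h13, h23⟩ v
  have hinj : Function.Injective ![c1, c2, c3] := by
    intro i j hij
    fin_cases i <;> fin_cases j <;> simp_all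
  have := h _ hinj (fun j => by fin_cases j <;> assumption) v
  simpa [funext_iff, Fin.forall_fin_succ, Fintype.card_fun] using this

end Balanced

theorem Fin.exists_injective_subset_range {n m : ℕ} (hm : n ≤ m) {S : Finset (Fin m)}
    (hS : S.card ≤ n) : ∃ L : Fin n → Fin m, Function.Injective L ∧ ↑S ⊆ Set.range L := by
  obtain ⟨S', hSS', hcard⟩ := exists_superset_card_eq hS (by simpa using hm)
  refine ⟨S'.orderEmbOfFin hcard, (S'.orderEmbOfFin hcard).injective, ?_⟩
  rw [range_orderEmbOfFin]
  exact coe_subset.mpr hSS'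

theorem Finset.exists_mem_forall_ne_of_card_le_three {ι β : Type*} [DecidableEq ι] {T : Finset ι}
    (hT : T.card ≤ 3) (f : ι → β) {x y : ι} (hx : x ∈ T) (hy : y ∈ T) (hxy : f x ≠ f y) :
    ∃ z ∈ T, (f z = f x ∨ f z = f y) ∧ ∀ w ∈ T, w ≠ z → f w ≠ f z := by
  by_contra! h
  obtain ⟨x', hx', hx'x, hfx'⟩ := h x hx (Or.inl rfl)
  obtain ⟨y', hy', hy'y, hfy'⟩ := h y hy (Or.inr rfl)
  have hcard : ({x, x', y, y'} : Finset ι).card = 4 := by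
    rw [card_insert_of_notMem, card_insert_of_notMem, card_pair hy'y.symm] <;>
      simp only [mem_insert, mem_singleton, not_or] <;> grind
  have hsub : ({x, x', y, y'} : Finset ι) ⊆ T := by
    simp [insert_subset_iff, hx, hx', hy, hy']
  have := card_le_card hsub
  omega

section JointlySurjective

variable {ι K V : Type*} [Field K] [AddCommGroup V] [Module K V]

def JointlySurjective (φ : ι → V →ₗ[K] K) (T : Finset ι) : Prop :=
  ∀ w : ι → K, ∃ x, ∀ i ∈ T, φ i x = w i

theorem jointlySurjective_empty (φ : ι → V →ₗ[K] K) : JointlySurjective φ ∅ :=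
  fun _ => ⟨0, by simp⟩

theorem JointlySurjective.insert [DecidableEq ι] {φ : ι → V →ₗ[K] K} {T : Finset ι}
    (hT : JointlySurjective φ T) {i : ι} {e : V} (he : ∀ j ∈ T, φ j e = 0) (hi : φ i e ≠ 0) :
    JointlySurjective φ (insert i T) := by
  intro w
  obtain ⟨x, hx⟩ := hT w
  refine ⟨x + ((w i - φ i x) / φ i e) • e, fun j hj => ?_⟩
  rcases mem_insert.mp hj with rfl | hj
  · simp [field]
  · simp [hx j hj, he j hj]

end JointlySurjective

abbrev Col (F : Type) [Zero F] (m1 m2 : ℕ) := ({g : F // g ≠ 0} × Fin m1 × Fin m2) ⊕ Fin m2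

section Columns

variable {F : Type} [Field F] {m1 m2 : ℕ}

def colForm : Col F m1 m2 → (Fin m1 → F) × (Fin m2 → F) →ₗ[F] F
  | Sum.inl (g, k, l) => LinearMap.proj k ∘ₗ LinearMap.fst F _ _
      + g.1 • (LinearMap.proj l ∘ₗ LinearMap.snd F _ _)
  | Sum.inr l => LinearMap.proj l ∘ₗ LinearMap.snd F _ _

@[simp]
theorem colForm_inl (g : {g : F // g ≠ 0}) (k : Fin m1) (l : Fin m2) (x) :
    colForm (Sum.inl (g, k, l)) x = x.1 k + g * x.2 l := rfl

@[simp]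
theorem colForm_inr (l : Fin m2) (x : (Fin m1 → F) × (Fin m2 → F)) :
    colForm (Sum.inr l) x = x.2 l := rfl

theorem FmatG_eq_colForm {I : Type} {n2 : ℕ} (A : I → Fin m1 → F) (B : I → Fin n2 → Fin m2 → F)
    (r : I × Fin n2) (c : Col F m1 m2) : FmatG A B r c = colForm c (A r.1, B r.1 r.2) := by
  rcases c with ⟨g, k, l⟩ | l <;> rfl

def aIndex : Col F m1 m2 → Option (Fin m1) := Sum.elim (fun c => some c.2.1) fun _ => none

def bIndex : Col F m1 m2 → Fin m2 := Sum.elim (fun c => c.2.2) id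

theorem eq_inr_of_aIndex_eq_none {c : Col F m1 m2} (h : aIndex c = none) :
    c = Sum.inr (bIndex c) := by
  rcases c with ⟨g, k, l⟩ | l <;> simp_all [aIndex, bIndex]

theorem colForm_eq_zero {c : Col F m1 m2} {x : (Fin m1 → F) × (Fin m2 → F)} (h1 : x.1 = 0)
    (h2 : x.2 (bIndex c) = 0) : colForm c x = 0 := by
  rcases c with ⟨g, k, l⟩ | l <;> simp_all [bIndex]

theorem colForm_single_snd_of_ne {c : Col F m1 m2} {l : Fin m2} (h : bIndex c ≠ l) :
    colForm c (0, Pi.single l 1) = 0 := by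
  rcases c with ⟨g, k, l'⟩ | l' <;> simp_all [bIndex]

theorem colForm_single_snd_ne_zero (c : Col F m1 m2) :
    colForm c (0, Pi.single (bIndex c) 1) ≠ 0 := by
  rcases c with ⟨g, k, l⟩ | l
  · simpa [bIndex] using g.2
  · simp [bIndex]

theorem colForm_single_fst_of_ne {c : Col F m1 m2} {k : Fin m1} (h : aIndex c ≠ some k) :
    colForm c (Pi.single k 1, 0) = 0 := by
  rcases c with ⟨g, k', l⟩ | l <;> simp_all [aIndex]

theorem colForm_single_fst_ne_zero {c : Col F m1 m2} {k : Fin m1} (h : aIndex c = some k) :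
    colForm c (Pi.single k 1, 0) ≠ 0 := by
  rcases c with ⟨g, k', l⟩ | l <;> simp_all [aIndex]

end Columns

section JointlySurjectiveColumns

variable {F : Type} [Field F] [DecidableEq F] {m1 m2 : ℕ}

theorem jointlySurjective_singleton (c : Col F m1 m2) : JointlySurjective colForm {c} :=
  (jointlySurjective_empty _).insert (by simp) (colForm_single_snd_ne_zero c)

theorem jointlySurjective_pair_of_apply_eq_zero {c c' : Col F m1 m2}
    {e : (Fin m1 → F) × (Fin m2 → F)}
    (he : colForm c' e = 0) (hc : colForm c e ≠ 0) : JointlySurjective colForm {c, c'} :=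
  (jointlySurjective_singleton c').insert (by simpa) hc

theorem jointlySurjective_pair {c c' : Col F m1 m2} (h : c ≠ c') :
    JointlySurjective colForm {c, c'} := by
  rcases c with ⟨g, k, l⟩ | l <;> rcases c' with ⟨g', k', l'⟩ | l'
  · by_cases hl : l = l'
    · by_cases hk : k = k'
      · subst hl hk
        have hg : g.1 ≠ g'.1 := fun hg => h (by rw [Subtype.ext hg])
        refine jointlySurjective_pair_of_apply_eq_zero (e := (Pi.single k (-g'.1), Pi.single l 1))
          (by simp) ?_
        simpa [neg_add_eq_zero] using hg.symm
      · exact jointlySurjective_pair_of_apply_eq_zero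
          (colForm_single_fst_of_ne (by simpa [aIndex] using Ne.symm hk))
          (colForm_single_fst_ne_zero rfl)
    · exact jointlySurjective_pair_of_apply_eq_zero
        (colForm_single_snd_of_ne (by simpa [bIndex] using Ne.symm hl))
        (colForm_single_snd_ne_zero _)
  · exact jointlySurjective_pair_of_apply_eq_zero (colForm_single_fst_of_ne (by simp [aIndex]))
      (colForm_single_fst_ne_zero rfl)
  · rw [pair_comm]
    exact jointlySurjective_pair_of_apply_eq_zero (colForm_single_fst_of_ne (by simp [aIndex]))
      (colForm_single_fst_ne_zero rfl)
  · exact jointlySurjective_pair_of_apply_eq_zero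
      (colForm_single_snd_of_ne (by simpa [bIndex] using fun h' => h (by rw [h'])))
      (colForm_single_snd_ne_zero _)

end JointlySurjectiveColumns

section Pencils

variable {F : Type} [Field F] [Fintype F] [DecidableEq F] {m1 m2 : ℕ}

def pencil (k : Fin m1) (l : Fin m2) : Finset (Col F m1 m2) :=
  insert (Sum.inr l) (univ.image fun g => Sum.inl (g, k, l))

theorem mem_pencil {k : Fin m1} {l : Fin m2} {c : Col F m1 m2} :
    c ∈ pencil k l ↔ c = Sum.inr l ∨ ∃ g, c = Sum.inl (g, k, l) := by
  simp [pencil, eq_comm]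

theorem mem_pencil_iff_index {k : Fin m1} {l : Fin m2} {c : Col F m1 m2} :
    c ∈ pencil k l ↔ bIndex c = l ∧ (aIndex c = some k ∨ aIndex c = none) := by
  rcases c with ⟨g, k', l'⟩ | l' <;> simp [mem_pencil, aIndex, bIndex, and_comm, eq_comm]

theorem card_pencil (k : Fin m1) (l : Fin m2) :
    (pencil k l : Finset (Col F m1 m2)).card = Fintype.card F := by
  rw [pencil, card_insert_of_notMem (by simp),
    card_image_of_injective _ fun g g' h => by simpa using h, card_univ]
  have := Fintype.card_pos (α := F)
  simp only [ne_eq, Fintype.card_subtype_compl, Fintype.card_unique]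
  omega

theorem eq_of_subset_pencil {T : Finset (Col F m1 m2)} (hT : 2 ≤ T.card) {k k' : Fin m1}
    {l l' : Fin m2} (h : T ⊆ pencil k l) (h' : T ⊆ pencil k' l') : k = k' ∧ l = l' := by
  obtain ⟨c, hc, hne⟩ := exists_mem_ne hT (Sum.inr l)
  obtain rfl | ⟨g, rfl⟩ := mem_pencil.mp (h hc)
  · exact absurd rfl hne
  obtain h'' | ⟨g', h''⟩ := mem_pencil.mp (h' hc) <;> simp_all

theorem exists_private_of_not_subset_pencil {T : Finset (Col F m1 m2)} (hT : T.card = 3)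
    (hgood : ∀ k l, ¬T ⊆ pencil k l) :
    ∃ c ∈ T, ∃ e, (∀ c' ∈ T.erase c, colForm c' e = 0) ∧ colForm c e ≠ 0 := by
  by_cases hb : ∃ x ∈ T, ∃ y ∈ T, bIndex x ≠ bIndex y
  · obtain ⟨x, hx, y, hy, hxy⟩ := hb
    obtain ⟨z, hz, -, huniq⟩ := exists_mem_forall_ne_of_card_le_three hT.le bIndex hx hy hxy
    exact ⟨z, hz, _, fun c hc => colForm_single_snd_of_ne (huniq c (mem_of_mem_erase hc)
      (ne_of_mem_erase hc)), colForm_single_snd_ne_zero z⟩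
  push Not at hb
  obtain ⟨x, hx, k, hk⟩ : ∃ x ∈ T, ∃ k, aIndex x = some k := by
    obtain ⟨x, hx, y, hy, hxy⟩ := one_lt_card.mp (by omega : 1 < T.card)
    by_contra! h
    have hx' := eq_inr_of_aIndex_eq_none (Option.eq_none_iff_forall_ne_some.mpr (h x hx))
    have hy' := eq_inr_of_aIndex_eq_none (Option.eq_none_iff_forall_ne_some.mpr (h y hy))
    exact hxy (by rw [hx', hy', hb x hx y hy])
  obtain ⟨y, hy, hyk⟩ := not_subset.mp (hgood k (bIndex x))
  have hya : aIndex y ≠ some k ∧ aIndex y ≠ none := by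
    simpa [mem_pencil_iff_index, hb y hy x hx, not_or] using hyk
  obtain ⟨z, hz, hzxy, huniq⟩ :=
    exists_mem_forall_ne_of_card_le_three hT.le aIndex hx hy (hk ▸ hya.1.symm)
  obtain ⟨kz, hkz⟩ := Option.ne_none_iff_exists'.mp (show aIndex z ≠ none by
    rcases hzxy with h | h <;> simp [h, hk, hya.2])
  exact ⟨z, hz, _, fun c hc => colForm_single_fst_of_ne (hkz ▸ huniq c (mem_of_mem_erase hc)
    (ne_of_mem_erase hc)), colForm_single_fst_ne_zero hkz⟩

theorem jointlySurjective_of_not_subset_pencil {T : Finset (Col F m1 m2)} (hT : T.card = 3)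
    (hgood : ∀ k l, ¬T ⊆ pencil k l) : JointlySurjective colForm T := by
  obtain ⟨c, hc, e, he, hce⟩ := exists_private_of_not_subset_pencil hT hgood
  obtain ⟨c1, c2, hne, hpair⟩ := card_eq_two.mp (by rw [card_erase_of_mem hc, hT])
  rw [← insert_erase hc, hpair]
  exact (jointlySurjective_pair hne).insert (hpair ▸ he) hce

theorem colForm_eq_zero_of_mem_pencil {k : Fin m1} {l : Fin m2} {c1 c2 c3 : Col F m1 m2}
    (h1 : c1 ∈ pencil k l) (h2 : c2 ∈ pencil k l) (h3 : c3 ∈ pencil k l) (h12 : c1 ≠ c2)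
    {x : (Fin m1 → F) × (Fin m2 → F)} (hx1 : colForm c1 x = 0) (hx2 : colForm c2 x = 0) :
    colForm c3 x = 0 := by
  have hx : x.1 k = 0 ∧ x.2 l = 0 := by
    rw [mem_pencil] at h1 h2
    rcases h1 with rfl | ⟨g1, rfl⟩ <;> rcases h2 with rfl | ⟨g2, rfl⟩
    · exact absurd rfl h12
    · simp_all
    · simp_all
    · have hg : g1.1 - g2.1 ≠ 0 := sub_ne_zero.mpr fun h => h12 (by rw [Subtype.ext h])
      simp only [colForm_inl] at hx1 hx2
      have hb : x.2 l = 0 :=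
        (mul_eq_zero.mp (by linear_combination hx1 - hx2)).resolve_left hg
      simp_all
  rcases mem_pencil.mp h3 with rfl | ⟨g3, rfl⟩ <;> simp [hx.1, hx.2]

theorem not_tripleOrth_FmatG_of_subset_pencil {I : Type} [Fintype I] [Nonempty I] {n2 : ℕ}
    (hn2 : 0 < n2) (A : I → Fin m1 → F) (B : I → Fin n2 → Fin m2 → F)
    {T : Finset (Col F m1 m2)} (hT : T.card = 3) {k : Fin m1} {l : Fin m2}
    (hsub : T ⊆ pencil k l) : ¬TripleOrth (FmatG A B) T := by
  obtain ⟨c1, c2, c3, h12, h13, h23, rfl⟩ := card_eq_three.mp hT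
  intro h
  have hempty : ∀ r : I × Fin n2,
      ¬(FmatG A B r c1 = 0 ∧ FmatG A B r c2 = 0 ∧ FmatG A B r c3 = 1) := by
    rintro r ⟨hr1, hr2, hr3⟩
    rw [FmatG_eq_colForm] at hr1 hr2 hr3
    rw [colForm_eq_zero_of_mem_pencil (hsub (by simp)) (hsub (by simp)) (hsub (by simp)) h12
      hr1 hr2] at hr3
    exact zero_ne_one hr3
  have hcount := h c1 c2 c3 ⟨by simp, by simp, by simp, h12, h13, h23⟩ ![0, 0, 1]
  simp [hempty, Fintype.card_ne_zero, hn2.ne'] at hcount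

theorem card_biUnion_powersetCard_pencil :
    (univ.biUnion fun p : Fin m1 × Fin m2 =>
      powersetCard 3 (pencil p.1 p.2 : Finset (Col F m1 m2))).card
      = m1 * m2 * (Fintype.card F).choose 3 := by
  rw [card_biUnion]
  · simp [card_powersetCard, card_pencil]
  · intro p _ q _ hpq
    refine disjoint_left.mpr fun T hTp hTq => hpq ?_
    rw [mem_powersetCard] at hTp hTq
    obtain ⟨hk, hl⟩ := eq_of_subset_pencil (by omega) hTp.1 hTq.1
    exact Prod.ext hk hl

end Pencils

section Orthogonality

variable {F : Type} [Field F] [Fintype F] [DecidableEq F] {I : Type} [Fintype I] {n2 m2 : ℕ}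

theorem isBalanced_FmatG {A : I → Fin 2 → F} {B : I → Fin n2 → Fin m2 → F} (hA : IsOA A 2)
    (hB : ∀ i, IsOA (B i) 3) (hm2 : 3 ≤ m2) {T : Finset (Col F 2 m2)} (hT : T.card ≤ 3)
    (hsurj : JointlySurjective colForm T) {t : ℕ} (cols : Fin t → Col F 2 m2)
    (hcols : Function.Injective cols) (hmem : ∀ j, cols j ∈ T) :
    IsBalanced fun r j => FmatG A B r (cols j) := by
  obtain ⟨L, hL, hcover⟩ :=
    Fin.exists_injective_subset_range hm2 (card_image_le.trans hT : (T.image bIndex).card ≤ 3)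
  -- `P` forgets all columns of `Bᵢ` but three that contain those read by `cols`; on these,
  -- `(A i, B i j)` is uniformly distributed.
  let P := (LinearMap.id : (Fin 2 → F) →ₗ[F] _).prodMap (LinearMap.funLeft F F L)
  let f : (Fin 2 → F) × (Fin m2 → F) →ₗ[F] (Fin t → F) := LinearMap.pi fun j => colForm (cols j)
  have hP : Function.Surjective P := Function.Surjective.prodMap Function.surjective_id
    (LinearMap.funLeft_surjective_of_injective F F L hL)
  have hX : IsBalanced (P ∘ fun r : I × Fin n2 => (A r.1, B r.1 r.2)) :=
    ((isOA_iff_isBalanced A 2).mp hA id Function.injective_id).prodMk fun i =>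
      (isOA_iff_isBalanced (B i) 3).mp (hB i) L hL
  have hf : Function.Surjective f := fun v => by
    obtain ⟨x, hx⟩ := hsurj (Function.extend cols v 0)
    exact ⟨x, funext fun j => (hx _ (hmem j)).trans (hcols.extend_apply v 0 j)⟩
  have hker : LinearMap.ker P ≤ LinearMap.ker f := by
    rintro ⟨a, b⟩ h
    simp only [LinearMap.mem_ker, P, LinearMap.prodMap_apply, LinearMap.id_apply,
      Prod.mk_eq_zero, LinearMap.funLeft_apply, funext_iff] at h
    refine LinearMap.mem_ker.mpr (funext fun j => colForm_eq_zero (funext h.1) ?_)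
    obtain ⟨t, ht⟩ := hcover (mem_coe.mpr (mem_image_of_mem _ (hmem j)))
    simpa [← ht] using h.2 t
  convert hX.comp_linearMap_of_ker_le P hP f hf hker using 1
  funext r j
  simp [f, FmatG_eq_colForm]

theorem isOA_FmatG {A : I → Fin 2 → F} {B : I → Fin n2 → Fin m2 → F} (hA : IsOA A 2)
    (hB : ∀ i, IsOA (B i) 3) (hm2 : 3 ≤ m2) : IsOA (FmatG A B) 2 := by
  refine (isOA_iff_isBalanced _ 2).mpr fun cols hcols => ?_
  refine isBalanced_FmatG hA hB hm2 (card_le_two.trans (by norm_num))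
    (jointlySurjective_pair (hcols.ne (by decide : (0 : Fin 2) ≠ 1))) cols hcols fun j => ?_
  fin_cases j <;> simp

theorem tripleOrth_FmatG_of_not_subset_pencil {A : I → Fin 2 → F}
    {B : I → Fin n2 → Fin m2 → F} (hA : IsOA A 2) (hB : ∀ i, IsOA (B i) 3) (hm2 : 3 ≤ m2)
    {T : Finset (Col F 2 m2)} (hT : T.card = 3) (hgood : ∀ k l, ¬T ⊆ pencil k l) :
    TripleOrth (FmatG A B) T :=
  tripleOrth_of_forall_isBalanced fun cols hcols hmem => isBalanced_FmatG hA hB hm2 hT.le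
    (jointlySurjective_of_not_subset_pencil hT hgood) cols hcols hmem

theorem filter_not_tripleOrth_FmatG [Nonempty I] (hn2 : 0 < n2) {A : I → Fin 2 → F}
    {B : I → Fin n2 → Fin m2 → F} (hA : IsOA A 2) (hB : ∀ i, IsOA (B i) 3) (hm2 : 3 ≤ m2) :
    (powersetCard 3 (univ : Finset (Col F 2 m2))).filter (fun T => ¬TripleOrth (FmatG A B) T)
      = univ.biUnion fun p : Fin 2 × Fin m2 => powersetCard 3 (pencil p.1 p.2) := by
  ext T
  simp only [mem_filter, mem_powersetCard, subset_univ, true_and, mem_biUnion, mem_univ]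
  constructor
  · rintro ⟨hT, hbad⟩
    by_contra! hgood
    exact hbad (tripleOrth_FmatG_of_not_subset_pencil hA hB hm2 hT
      fun k l hsub => hgood (k, l) hsub hT)
  · rintro ⟨p, hsub, hT⟩
    exact ⟨hT, not_tripleOrth_FmatG_of_subset_pencil hn2 A B hT hsub⟩

end Orthogonality

theorem card_col (F : Type) [Zero F] [Fintype F] [DecidableEq F] (m2 : ℕ) :
    Fintype.card (Col F 2 m2) = (2 * Fintype.card F - 1) * m2 := by
  obtain ⟨s, hs⟩ := Nat.exists_eq_add_one_of_ne_zero (Fintype.card_ne_zero (α := F))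
  simp only [Fintype.card_sum, Fintype.card_prod, ne_eq, Fintype.card_subtype_compl,
    Fintype.card_unique, Fintype.card_fin, hs, Nat.add_sub_cancel,
    show 2 * (s + 1) - 1 = 2 * s + 1 by omega]
  ring

theorem Nat.cast_choose_three (n : ℕ) : (n.choose 3 : ℚ) = n * (n - 1) * (n - 2) / 6 := by
  rw [Nat.cast_choose_eq_descPochhammer_div]
  simp [descPochhammer_succ_right, Nat.factorial]

theorem two_mul_choose_three_div_choose_three {s m : ℕ} (hs : 2 ≤ s) (hm : 3 ≤ m) :
    (2 * m * s.choose 3 : ℚ) / (((2 * s - 1) * m).choose 3 : ℚ)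
      = 2 * (s : ℚ) * ((s : ℚ) - 1) * ((s : ℚ) - 2)
        / ((2 * (s : ℚ) - 1) * (((2 * s - 1) * m : ℚ) - 1) * (((2 * s - 1) * m : ℚ) - 2)) := by
  have hs' : (2 : ℚ) ≤ s := by exact_mod_cast hs
  have hm' : (3 : ℚ) ≤ m := by exact_mod_cast hm
  have h1 : (2 * (s : ℚ) - 1) * m - 1 ≠ 0 := by nlinarith
  have h2 : (2 * (s : ℚ) - 1) * m - 2 ≠ 0 := by nlinarith
  rw [Nat.cast_choose_three, Nat.cast_choose_three]
  push_cast [Nat.cast_sub (by omega : 1 ≤ 2 * s)]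
  field_simp

/-- Proposition 4: with `A` an `OA(s², 2, s, 2)` and each `Bᵢ` an
`OA(n₂, m₂, s, 3)`, the array `𝐅` (i.e. `E` with the two columns of `D_{s+1}` removed) is an
`OA(n₂s², (2s−1)m₂, s, 2)`; exactly `2m₂·C(s,3)` of the 3-element sets of columns of `𝐅` fail
to be 3-orthogonal; and consequently
`p(𝐅) = 1 − 2m₂·C(s,3)/C((2s−1)m₂,3) = 1 − 2s(s−1)(s−2)/((2s−1)(γ−1)(γ−2))`, `γ = (2s−1)m₂`. -/
theorem statement15 {F : Type} [Field F] [Fintype F] [DecidableEq F]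
    {n2 m2 : ℕ} (hn2 : 0 < n2) (hm2 : 3 ≤ m2)
    (A : Fin (Fintype.card F ^ 2) → Fin 2 → F) (hA : IsOA A 2)
    (B : Fin (Fintype.card F ^ 2) → Fin n2 → Fin m2 → F) (hB : ∀ i, IsOA (B i) 3) :
    IsOA (FmatG A B) 2 ∧
    Fintype.card (({g : F // g ≠ 0} × Fin 2 × Fin m2) ⊕ Fin m2)
      = (2 * Fintype.card F - 1) * m2 ∧
    ((Finset.powersetCard 3
        (Finset.univ : Finset (({g : F // g ≠ 0} × Fin 2 × Fin m2) ⊕ Fin m2))).filter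
          fun T => ¬ TripleOrth (FmatG A B) T).card
      = 2 * m2 * (Fintype.card F).choose 3 ∧
    (((Finset.powersetCard 3
        (Finset.univ : Finset (({g : F // g ≠ 0} × Fin 2 × Fin m2) ⊕ Fin m2))).filter
          fun T => TripleOrth (FmatG A B) T).card : ℚ)
        / (((2 * Fintype.card F - 1) * m2).choose 3 : ℚ)
      = 1 - (2 * m2 * (Fintype.card F).choose 3 : ℚ)
          / (((2 * Fintype.card F - 1) * m2).choose 3 : ℚ) ∧
    (((Finset.powersetCard 3
        (Finset.univ : Finset (({g : F // g ≠ 0} × Fin 2 × Fin m2) ⊕ Fin m2))).filter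
          fun T => TripleOrth (FmatG A B) T).card : ℚ)
        / (((2 * Fintype.card F - 1) * m2).choose 3 : ℚ)
      = 1 - 2 * (Fintype.card F : ℚ) * ((Fintype.card F : ℚ) - 1) * ((Fintype.card F : ℚ) - 2)
          / ((2 * (Fintype.card F : ℚ) - 1)
              * (((2 * Fintype.card F - 1) * m2 : ℚ) - 1)
              * (((2 * Fintype.card F - 1) * m2 : ℚ) - 2)) := by
  have hs : 2 ≤ Fintype.card F := Fintype.one_lt_card
  have : Nonempty (Fin (Fintype.card F ^ 2)) := ⟨⟨0, by positivity⟩⟩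
  have hbad : ((powersetCard 3 (univ : Finset (Col F 2 m2))).filter
      fun T => ¬TripleOrth (FmatG A B) T).card = 2 * m2 * (Fintype.card F).choose 3 := by
    rw [filter_not_tripleOrth_FmatG hn2 hA hB hm2, card_biUnion_powersetCard_pencil]
  have hsplit := card_filter_add_card_filter_not
    (s := powersetCard 3 (univ : Finset (Col F 2 m2))) fun T => TripleOrth (FmatG A B) T
  rw [hbad, card_powersetCard, card_univ, card_col] at hsplit
  have hN : (((2 * Fintype.card F - 1) * m2).choose 3 : ℚ) ≠ 0 := Nat.cast_ne_zero.mpr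
    (Nat.choose_pos (hm2.trans (Nat.le_mul_of_pos_left m2 (by omega)))).ne'
  refine ⟨isOA_FmatG hA hB hm2, card_col F m2, hbad, ?_⟩
  rw [← two_mul_choose_three_div_choose_three hs hm2, and_self, eq_sub_iff_add_eq, ← add_div,
    div_eq_one_iff_eq hN]
  exact_mod_cast hsplit
end
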